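/- Let d ≥ 2 and let K ⊂ ℝ^d be a convex body in standard position: w(K) = 1, K is spiky in direction −e_d, and K ∩ H_K(−e_d) = {0}; write T_K = T_K(0) and H_t = {x : x_d = t}. Fix ε ∈ (0,1) and for t > 0 let δ_t be the Hausdorff distance between ∂T_K ∩ H_t and (T_K \ int(ε·K)) ∩ H_t. Then δ_t is monotonically decreasing as t decreases to 0, and δ_t / t → 0 as t → 0 along positive values. -/

import Mathlib

open Set Metric Pointwise RealInnerProductSpace MeasureTheory

noncomputable section

/-- A plank in `ℝ^d`: the region between two parallel hyperplanes, of width `w`. -/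
def IsPlank {d : ℕ} (P : Set (EuclideanSpace ℝ (Fin d))) (w : ℝ) : Prop :=
  ∃ (u : EuclideanSpace ℝ (Fin d)) (a b : ℝ), ‖u‖ = 1 ∧ a ≤ b ∧ w = b - a ∧
    P = {x | a ≤ ⟪x, u⟫ ∧ ⟪x, u⟫ ≤ b}

/-- The support function of a set. -/
def suppFn {d : ℕ} (K : Set (EuclideanSpace ℝ (Fin d))) (u : EuclideanSpace ℝ (Fin d)) : ℝ :=
  sSup ((fun x => ⟪x, u⟫) '' K)

/-- The minimal width of a set: the minimum of `h_K(u) + h_K(-u)` over unit vectors `u`. -/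
def minWidth {d : ℕ} (K : Set (EuclideanSpace ℝ (Fin d))) : ℝ :=
  sInf {w | ∃ u : EuclideanSpace ℝ (Fin d), ‖u‖ = 1 ∧ w = suppFn K u + suppFn K (-u)}

/-- The supporting hyperplane of `K` with outer normal `u`. -/
def suppHyp {d : ℕ} (K : Set (EuclideanSpace ℝ (Fin d))) (u : EuclideanSpace ℝ (Fin d)) :
    Set (EuclideanSpace ℝ (Fin d)) :=
  {x | ⟪x, u⟫ = suppFn K u}

/-- The tangent cone of `K` at a point `x`:
`closure {x + α (y - x) : y ∈ K, α ≥ 0}`. -/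
def tangentConeOf {d : ℕ} (K : Set (EuclideanSpace ℝ (Fin d))) (x : EuclideanSpace ℝ (Fin d)) :
    Set (EuclideanSpace ℝ (Fin d)) :=
  closure {z | ∃ y ∈ K, ∃ α : ℝ, 0 ≤ α ∧ z = x + α • (y - x)}

/-- `K` is spiky in direction `u`: `K ∩ H_K(u)` is a single point `x` at which
`T_K(x) ∩ H_K(u) = {x}`. -/
def IsSpiky {d : ℕ} (K : Set (EuclideanSpace ℝ (Fin d))) (u : EuclideanSpace ℝ (Fin d)) : Prop :=
  ∃ x, K ∩ suppHyp K u = {x} ∧ tangentConeOf K x ∩ suppHyp K u = {x}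

/-
The tangent cone `T = T_K(0)` is a closed convex cone, so the two slices at height `t` are the
dilates by `t` of the slices at height `1` of `T` and of `T \ int((ε/t) • K)`. Hence
`δ_t = t · g(ε/t)`, where `g(λ)` is the Hausdorff distance between `∂T ∩ H_1` and
`(T \ int(λ • K)) ∩ H_1`. Spikiness means that `T` meets `H_0` only at `0`, so `T ∩ H_1` is
compact; and `g` is antitone because the dilates `λ • K` increase with `λ`. This gives the
monotonicity of `δ`. Finally `int T` is the increasing union of the open sets `int(n • K)`: by
compactness, the points of `T ∩ H_1` at distance at least `η` from `∂T` all lie in `int(λ • K)`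
once `λ` is large, so `g(λ) → 0`, which is `δ_t / t → 0`.
-/

open Filter Topology

section HausdorffDist

variable {α : Type*} [PseudoMetricSpace α]

theorem Metric.hausdorffDist_le_hausdorffDist_of_subset {A B C : Set α} (hAB : A ⊆ B)
    (hBC : B ⊆ C) (hC : Bornology.IsBounded C) : hausdorffDist A B ≤ hausdorffDist A C := by
  rcases A.eq_empty_or_nonempty with rfl | hA
  · simp
  refine hausdorffDist_le_of_infDist hausdorffDist_nonneg
    (fun x hx => (infDist_zero_of_mem (hAB hx)).trans_le hausdorffDist_nonneg) fun y hy => ?_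
  rw [hausdorffDist_comm]
  exact infDist_le_hausdorffDist_of_mem (hBC hy) <|
    hausdorffEDist_ne_top_of_nonempty_of_bounded (hA.mono (hAB.trans hBC)) hA hC
      (hC.subset (hAB.trans hBC))

theorem Metric.tendsto_hausdorffDist_sdiff {ι κ : Type*} {l : Filter ι} {P V : Set α}
    {U : κ → Set α} {W : ι → Set α} (hP : IsCompact P) (hUo : ∀ k, IsOpen (U k))
    (hcover : P ∩ V ⊆ ⋃ k, U k) (hUW : ∀ k, ∀ᶠ i in l, U k ⊆ W i)
    (hWV : ∀ᶠ i in l, W i ⊆ V) :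
    Tendsto (fun i => hausdorffDist (P \ V) (P \ W i)) l (𝓝 0) := by
  have key : ∀ η > 0, ∀ᶠ i in l, hausdorffDist (P \ V) (P \ W i) ≤ η := by
    intro η hη
    set S := P ∩ {y | η ≤ infDist y (P \ V)}
    have hS : IsCompact S :=
      hP.inter_right (isClosed_le continuous_const (continuous_infDist_pt _))
    have hSU : S ⊆ ⋃ k, U k := by
      refine fun y hy => hcover ⟨hy.1, ?_⟩
      by_contra hyV
      have hη_le : η ≤ infDist y (P \ V) := hy.2
      rw [infDist_zero_of_mem (show y ∈ P \ V from ⟨hy.1, hyV⟩)] at hη_le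
      linarith
    obtain ⟨F, hF⟩ := hS.elim_finite_subcover U hUo hSU
    filter_upwards [(eventually_all_finset F).2 fun k _ => hUW k, hWV] with i hUi hWi
    refine hausdorffDist_le_of_infDist hη.le (fun x hx => ?_) fun y hy => ?_
    · rw [infDist_zero_of_mem (show x ∈ P \ W i from ⟨hx.1, fun h => hx.2 (hWi h)⟩)]
      exact hη.le
    · by_contra! hlt
      obtain ⟨k, hk, hyk⟩ := mem_iUnion₂.1 (hF ⟨hy.1, hlt.le⟩)
      exact hy.2 (hUi k hk hyk)
  refine tendsto_order.2 ⟨fun a ha => Eventually.of_forall fun i =>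
    ha.trans_le hausdorffDist_nonneg, fun a ha => ?_⟩
  filter_upwards [key (a / 2) (by positivity)] with i hi
  linarith

end HausdorffDist

section Scaling

variable {𝕜 E : Type*} [NormedField 𝕜] [SeminormedAddCommGroup E] [NormedSpace 𝕜 E]

theorem Metric.hausdorffEDist_smul₀ {c : 𝕜} (hc : c ≠ 0) (s t : Set E) :
    hausdorffEDist (c • s) (c • t) = ‖c‖₊ • hausdorffEDist s t := by
  simp only [hausdorffEDist_def, ← image_smul (t := s), ← image_smul (t := t), iSup_image]
  simp only [image_smul, infEDist_smul₀ hc, ENNReal.smul_def, smul_eq_mul, ENNReal.mul_iSup,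
    mul_max]

theorem Metric.hausdorffDist_smul₀ {c : 𝕜} (hc : c ≠ 0) (s t : Set E) :
    hausdorffDist (c • s) (c • t) = ‖c‖ * hausdorffDist s t := by
  simp_rw [hausdorffDist, hausdorffEDist_smul₀ hc, ENNReal.toReal_smul, NNReal.smul_def,
    coe_nnnorm, smul_eq_mul]

end Scaling

theorem frontier_smul₀ {G₀ X : Type*} [GroupWithZero G₀] [TopologicalSpace X] [MulAction G₀ X]
    [ContinuousConstSMul G₀ X] {c : G₀} (hc : c ≠ 0) (s : Set X) :
    frontier (c • s) = c • frontier s := by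
  simp only [frontier, closure_smul₀' hc, interior_smul₀ hc, smul_set_sdiff₀ hc]

section ConeAlgebra

variable {E : Type*} [AddCommGroup E] [Module ℝ E]

theorem Convex.smul_set_subset_smul_set {K : Set E} (hK : Convex ℝ K) (h0 : (0 : E) ∈ K)
    {a b : ℝ} (ha : 0 ≤ a) (hab : a ≤ b) : a • K ⊆ b • K := by
  rcases ha.eq_or_lt with rfl | ha
  · exact (zero_smul_set_subset K).trans (by simpa using ⟨0, h0, smul_zero b⟩)
  rintro _ ⟨y, hy, rfl⟩
  refine ⟨(a / b) • y, hK.smul_mem_of_zero_mem h0 hy ⟨div_nonneg ha.le (ha.le.trans hab), ?_⟩, ?_⟩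
  · exact div_le_one_of_le₀ hab (ha.le.trans hab)
  · change b • (a / b) • y = a • y
    rw [smul_smul, mul_div_cancel₀ _ (ha.trans_le hab).ne']

theorem ConvexCone.smul_coe_eq (C : ConvexCone ℝ E) {c : ℝ} (hc : 0 < c) :
    c • (C : Set E) = C := by
  refine (smul_set_subset_iff.2 fun x hx => C.smul_mem hc hx).antisymm fun x hx => ?_
  exact ⟨c⁻¹ • x, C.smul_mem (inv_pos.2 hc) hx, smul_inv_smul₀ hc.ne' x⟩

theorem ConvexCone.smul_set_subset (C : ConvexCone ℝ E) {K : Set E} (hKC : K ⊆ C)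
    (h0 : (0 : E) ∈ C) {c : ℝ} (hc : 0 ≤ c) : c • K ⊆ C := by
  rcases hc.eq_or_lt with rfl | hc
  · exact (zero_smul_set_subset K).trans (by simpa using h0)
  · exact (smul_set_mono hKC).trans (C.smul_coe_eq hc).le

end ConeAlgebra

section Cone

variable {E : Type*} [NormedAddCommGroup E] [NormedSpace ℝ E]

theorem exists_pos_add_smul_mem_of_mem_interior {s : Set E} {x : E} (hx : x ∈ interior s)
    (v : E) : ∃ t : ℝ, 0 < t ∧ x + t • v ∈ s := by
  have hcont : Tendsto (fun t : ℝ => x + t • v) (𝓝 0) (𝓝 x) := by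
    simpa using tendsto_const_nhds.add ((continuous_id.tendsto (0 : ℝ)).smul_const v)
  exact (hcont.eventually (mem_interior_iff_mem_nhds.1 hx)).exists_gt

theorem interior_closure_hull_subset {K : Set E} (hK : Convex ℝ K) (h0 : (0 : E) ∈ K)
    (hKint : (interior K).Nonempty) :
    interior (closure (ConvexCone.hull ℝ K : Set E)) ⊆ ⋃ n : ℕ, interior ((n : ℝ) • K) := by
  intro y hy
  rw [(ConvexCone.convex _).interior_closure_eq_interior_of_nonempty_interior
    (hKint.mono (interior_mono ConvexCone.subset_hull))] at hy
  obtain ⟨p, hp⟩ := hKint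
  -- `y` lies strictly between `p ∈ int K` and a point `y + s • (y - p)` of some `n • K`.
  obtain ⟨s, hs, hys⟩ := exists_pos_add_smul_mem_of_mem_interior hy (y - p)
  obtain ⟨r, hr, hyr⟩ := (ConvexCone.mem_hull_of_convex hK).1 hys
  obtain ⟨n, hn⟩ := exists_nat_ge (max r 1)
  have hy' : y + s • (y - p) ∈ (n : ℝ) • K :=
    hK.smul_set_subset_smul_set h0 hr.le ((le_max_left _ _).trans hn) hyr
  have hp' : p ∈ interior ((n : ℝ) • K) := by
    refine interior_mono ?_ hp
    simpa using hK.smul_set_subset_smul_set h0 zero_le_one ((le_max_right r 1).trans hn)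
  have hmem := (hK.smul (n : ℝ)).add_smul_sub_mem_interior' (subset_closure hy') hp'
    (t := s / (1 + s)) ⟨by positivity, div_le_one_of_le₀ (by linarith) (by positivity)⟩
  refine mem_iUnion.2 ⟨n, ?_⟩
  convert hmem using 1
  match_scalars <;> field_simp <;> ring

theorem ConvexCone.exists_pos_mul_norm_le [ProperSpace E] (C : ConvexCone ℝ E)
    (hC : IsClosed (C : Set E)) (f : E →L[ℝ] ℝ) (hpos : ∀ x ∈ C, x ≠ 0 → 0 < f x) :
    ∃ m > 0, ∀ x ∈ C, m * ‖x‖ ≤ f x := by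
  obtain ⟨m, hm, hmin⟩ := ((isCompact_sphere (0 : E) 1).inter_left hC).exists_forall_le'
    f.continuous.continuousOn fun x hx => hpos x hx.1 (ne_zero_of_mem_unit_sphere ⟨x, hx.2⟩)
  refine ⟨m, hm, fun x hx => ?_⟩
  rcases eq_or_ne x 0 with rfl | hx0
  · simp
  have hn : 0 < ‖x‖ := norm_pos_iff.2 hx0
  have h := hmin (‖x‖⁻¹ • x) ⟨C.smul_mem (inv_pos.2 hn) hx, by simp [norm_smul, hn.ne']⟩
  rwa [map_smul, smul_eq_mul, le_inv_mul_iff₀ hn, mul_comm] at h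

theorem ConvexCone.isCompact_inter_setOf_eq [ProperSpace E] (C : ConvexCone ℝ E)
    (hC : IsClosed (C : Set E)) (f : E →L[ℝ] ℝ) (hpos : ∀ x ∈ C, x ≠ 0 → 0 < f x) (t : ℝ) :
    IsCompact ((C : Set E) ∩ {x | f x = t}) := by
  obtain ⟨m, hm, hle⟩ := C.exists_pos_mul_norm_le hC f hpos
  refine isCompact_of_isClosed_isBounded (hC.inter (isClosed_eq f.continuous continuous_const))
    ((isBounded_closedBall (x := 0) (r := t / m)).subset fun x hx => ?_)
  rw [mem_closedBall_zero_iff, le_div_iff₀ hm, mul_comm, ← hx.2]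
  exact hle x hx.1

theorem apply_nonneg_of_mem_closure_hull {K : Set E} (hK : Convex ℝ K) (f : E →L[ℝ] ℝ)
    (hf : ∀ x ∈ K, 0 ≤ f x) : ∀ x ∈ closure (ConvexCone.hull ℝ K : Set E), 0 ≤ f x := by
  refine fun x hx => closure_minimal (fun z hz => ?_) (isClosed_le continuous_const f.continuous) hx
  obtain ⟨r, hr, y, hy, rfl⟩ := (ConvexCone.mem_hull_of_convex hK).1 hz
  simpa only [mem_ofPred_eq, map_smul, smul_eq_mul] using mul_nonneg hr.le (hf y hy)

end Cone

/-- The paper's `δ_t` for a cone `T`, with the hyperplanes `H_t` taken to be the level sets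
of `f`. -/
def sliceGap {E : Type*} [NormedAddCommGroup E] [NormedSpace ℝ E] (T K : Set E)
    (f : E →L[ℝ] ℝ) (ε t : ℝ) : ℝ :=
  hausdorffDist (frontier T ∩ {x | f x = t}) ((T \ interior (ε • K)) ∩ {x | f x = t})

section SliceGap

variable {E : Type*} [NormedAddCommGroup E] [NormedSpace ℝ E] (C : ConvexCone ℝ E) {K : Set E}
  (f : E →L[ℝ] ℝ)

theorem smul_setOf_apply_eq_one {t : ℝ} (ht : t ≠ 0) :
    t • {x | f x = 1} = {x | f x = t} := by
  ext x
  rw [mem_smul_set_iff_inv_smul_mem₀ ht]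
  simp only [mem_ofPred_eq, map_smul, smul_eq_mul]
  rw [inv_mul_eq_one₀ ht, eq_comm]

theorem sliceGap_eq_mul (ε : ℝ) {t : ℝ} (ht : 0 < t) :
    sliceGap C K f ε t = t * sliceGap C K f (ε / t) 1 := by
  have hC := C.smul_coe_eq ht
  have hH := smul_setOf_apply_eq_one f ht.ne'
  have hK : t • (ε / t) • K = ε • K := by rw [smul_smul, mul_div_cancel₀ _ ht.ne']
  calc sliceGap C K f ε t
      = hausdorffDist (t • (frontier C ∩ {x | f x = 1}))
          (t • (((C : Set E) \ interior ((ε / t) • K)) ∩ {x | f x = 1})) := by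
        rw [smul_set_inter₀ ht.ne', smul_set_inter₀ ht.ne', smul_set_sdiff₀ ht.ne',
          ← frontier_smul₀ ht.ne', ← interior_smul₀ ht.ne', hC, hH, hK, sliceGap]
    _ = t * sliceGap C K f (ε / t) 1 := by
        rw [hausdorffDist_smul₀ ht.ne', Real.norm_of_nonneg ht.le, sliceGap]

theorem sliceGap_one_eq (hC : IsClosed (C : Set E)) (ε : ℝ) :
    sliceGap C K f ε 1 = hausdorffDist (((C : Set E) ∩ {x | f x = 1}) \ interior C)
      (((C : Set E) ∩ {x | f x = 1}) \ interior (ε • K)) := by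
  rw [sliceGap, hC.frontier_eq, inter_sdiff_right_comm, inter_sdiff_right_comm]

theorem sliceGap_one_antitoneOn (hC : IsClosed (C : Set E)) (hK : Convex ℝ K)
    (h0 : (0 : E) ∈ K) (hKC : K ⊆ C)
    (hP : Bornology.IsBounded ((C : Set E) ∩ {x | f x = 1})) :
    AntitoneOn (fun ν => sliceGap C K f ν 1) (Ici 0) := by
  intro μ hμ ν _ hμν
  simp only [sliceGap_one_eq C f hC]
  refine hausdorffDist_le_hausdorffDist_of_subset (sdiff_subset_sdiff_right ?_)
    (sdiff_subset_sdiff_right ?_) (hP.subset sdiff_subset)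
  · exact interior_mono (C.smul_set_subset hKC (hKC h0) (le_trans hμ hμν))
  · exact interior_mono (hK.smul_set_subset_smul_set h0 hμ hμν)

theorem tendsto_sliceGap_one_atTop (hC : IsClosed (C : Set E)) (hK : Convex ℝ K)
    (h0 : (0 : E) ∈ K) (hKC : K ⊆ C)
    (hP : IsCompact ((C : Set E) ∩ {x | f x = 1}))
    (hcover : interior (C : Set E) ⊆ ⋃ n : ℕ, interior ((n : ℝ) • K)) :
    Tendsto (fun ν => sliceGap C K f ν 1) atTop (𝓝 0) := by
  simp_rw [sliceGap_one_eq C f hC]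
  refine tendsto_hausdorffDist_sdiff hP (fun n => isOpen_interior)
    (inter_subset_right.trans hcover) (fun n => ?_) ?_
  · filter_upwards [eventually_ge_atTop (n : ℝ)] with ν hν
    exact interior_mono (hK.smul_set_subset_smul_set h0 n.cast_nonneg hν)
  · filter_upwards [eventually_ge_atTop 0] with ν hν
    exact interior_mono (C.smul_set_subset hKC (hKC h0) hν)

theorem sliceGap_monotoneOn (hC : IsClosed (C : Set E)) (hK : Convex ℝ K)
    (h0 : (0 : E) ∈ K) (hKC : K ⊆ C)
    (hP : Bornology.IsBounded ((C : Set E) ∩ {x | f x = 1})) {ε : ℝ} (hε : 0 ≤ ε) :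
    MonotoneOn (sliceGap C K f ε) (Ioi 0) := by
  intro s (hs : 0 < s) t (ht : 0 < t) hst
  rw [sliceGap_eq_mul C f ε hs, sliceGap_eq_mul C f ε ht]
  calc s * sliceGap C K f (ε / s) 1 ≤ t * sliceGap C K f (ε / s) 1 :=
        mul_le_mul_of_nonneg_right hst hausdorffDist_nonneg
    _ ≤ t * sliceGap C K f (ε / t) 1 := by
        refine mul_le_mul_of_nonneg_left ?_ ht.le
        exact sliceGap_one_antitoneOn C f hC hK h0 hKC hP (div_nonneg hε ht.le)
          (div_nonneg hε hs.le) (div_le_div_of_nonneg_left hε hs hst)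

theorem tendsto_sliceGap_div (hC : IsClosed (C : Set E)) (hK : Convex ℝ K)
    (h0 : (0 : E) ∈ K) (hKC : K ⊆ C)
    (hP : IsCompact ((C : Set E) ∩ {x | f x = 1}))
    (hcover : interior (C : Set E) ⊆ ⋃ n : ℕ, interior ((n : ℝ) • K)) {ε : ℝ} (hε : 0 < ε) :
    Tendsto (fun t => sliceGap C K f ε t / t) (𝓝[>] 0) (𝓝 0) := by
  have hinv : Tendsto (fun t : ℝ => ε / t) (𝓝[>] 0) atTop := by
    simpa only [div_eq_mul_inv] using tendsto_inv_nhdsGT_zero.const_mul_atTop hε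
  refine ((tendsto_sliceGap_one_atTop C f hC hK h0 hKC hP hcover).comp hinv).congr' ?_
  filter_upwards [self_mem_nhdsWithin] with t (ht : 0 < t)
  rw [Function.comp_apply, sliceGap_eq_mul C f ε ht, mul_div_cancel_left₀ _ ht.ne']

end SliceGap

section ClosureHull

variable {E : Type*} [NormedAddCommGroup E] [NormedSpace ℝ E] [ProperSpace E] {K : Set E}
  (f : E →L[ℝ] ℝ)

theorem monotoneOn_and_tendsto_sliceGap_closure_hull (hK : Convex ℝ K)
    (h0 : (0 : E) ∈ K) (hKint : (interior K).Nonempty) (hf : ∀ x ∈ K, 0 ≤ f x)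
    (hker : ∀ x ∈ closure (ConvexCone.hull ℝ K : Set E), f x = 0 → x = 0) {ε : ℝ}
    (hε : 0 < ε) :
    MonotoneOn (sliceGap (closure (ConvexCone.hull ℝ K : Set E)) K f ε) (Ioi 0) ∧
    Tendsto (fun t => sliceGap (closure (ConvexCone.hull ℝ K : Set E)) K f ε t / t)
      (𝓝[>] 0) (𝓝 0) := by
  set C := (ConvexCone.hull ℝ K).closure
  have hCeq : (C : Set E) = closure (ConvexCone.hull ℝ K : Set E) := ConvexCone.coe_closure _
  have hC : IsClosed (C : Set E) := hCeq ▸ isClosed_closure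
  have hKC : K ⊆ C := hCeq ▸ ConvexCone.subset_hull.trans subset_closure
  have hpos : ∀ x ∈ C, x ≠ 0 → 0 < f x := fun x hx hx0 =>
    (apply_nonneg_of_mem_closure_hull hK f hf x (hCeq ▸ hx)).lt_of_ne'
      fun hfx => hx0 (hker x (hCeq ▸ hx) hfx)
  have hP := C.isCompact_inter_setOf_eq hC f hpos 1
  have hcover := interior_closure_hull_subset hK h0 hKint
  rw [← hCeq] at hcover ⊢
  exact ⟨sliceGap_monotoneOn C f hC hK h0 hKC hP.isBounded hε.le,
    tendsto_sliceGap_div C f hC hK h0 hKC hP hcover hε⟩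

end ClosureHull

section Euclidean

variable {d : ℕ}

theorem tangentConeOf_zero_eq {K : Set (EuclideanSpace ℝ (Fin d))} (hK : Convex ℝ K)
    (h0 : (0 : EuclideanSpace ℝ (Fin d)) ∈ K) :
    tangentConeOf K 0 = closure (ConvexCone.hull ℝ K : Set (EuclideanSpace ℝ (Fin d))) := by
  rw [tangentConeOf]
  congr 1
  ext z
  simp only [zero_add, sub_zero, mem_ofPred_eq, SetLike.mem_coe, ConvexCone.mem_hull_of_convex hK]
  constructor
  · rintro ⟨y, hy, α, hα, rfl⟩
    rcases hα.eq_or_lt with rfl | hα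
    · exact ⟨1, one_pos, by simpa using h0⟩
    · exact ⟨α, hα, smul_mem_smul_set hy⟩
  · rintro ⟨r, hr, y, hy, rfl⟩
    exact ⟨y, hy, r, hr.le, rfl⟩

theorem inner_le_suppFn {K : Set (EuclideanSpace ℝ (Fin d))} (hK : IsCompact K)
    (u : EuclideanSpace ℝ (Fin d)) {x : EuclideanSpace ℝ (Fin d)} (hx : x ∈ K) :
    ⟪x, u⟫ ≤ suppFn K u :=
  le_csSup (hK.image (continuous_id.inner continuous_const)).bddAbove ⟨x, hx, rfl⟩

end Euclidean

/-- for a spiky convex body in standard position and `ε ∈ (0,1)`, the Hausdorff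
distance `δ_t` between `∂T_K ∩ H_t` and `(T_K \ int (ε • K)) ∩ H_t` is monotonically
decreasing as `t ↘ 0`, and `δ_t / t → 0` as `t → 0⁺`. -/
theorem hausdorff_distance_of_slices (d : ℕ) (hd : 2 ≤ d)
    (K : Set (EuclideanSpace ℝ (Fin d)))
    (hKc : IsCompact K) (hKconv : Convex ℝ K) (hKint : (interior K).Nonempty)
    (hspiky : IsSpiky K (-(EuclideanSpace.single (⟨d - 1, by omega⟩ : Fin d) (1 : ℝ))))
    (hzero : K ∩ suppHyp K (-(EuclideanSpace.single (⟨d - 1, by omega⟩ : Fin d) (1 : ℝ))) = {0})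
    (ε : ℝ) (hε : ε ∈ Set.Ioo (0 : ℝ) 1)
    (δ : ℝ → ℝ)
    (hδ : ∀ t : ℝ, δ t = Metric.hausdorffDist
      (frontier (tangentConeOf K 0) ∩ {x : EuclideanSpace ℝ (Fin d) | x ⟨d - 1, by omega⟩ = t})
      ((tangentConeOf K 0 \ interior (ε • K)) ∩
        {x : EuclideanSpace ℝ (Fin d) | x ⟨d - 1, by omega⟩ = t})) :
    (∀ s t : ℝ, 0 < s → s ≤ t → δ s ≤ δ t) ∧
    Filter.Tendsto (fun t : ℝ => δ t / t) (nhdsWithin 0 (Set.Ioi 0)) (nhds 0) := by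
  set i : Fin d := ⟨d - 1, by omega⟩
  have h0 : (0 : EuclideanSpace ℝ (Fin d)) ∈ K ∩ suppHyp K (-EuclideanSpace.single i 1) :=
    hzero ▸ rfl
  have hsupp : suppFn K (-EuclideanSpace.single i 1) = 0 := by simpa [suppHyp] using h0.2.symm
  have hfK : ∀ x ∈ K, 0 ≤ x i := fun x hx => by
    simpa [EuclideanSpace.inner_single_right, hsupp] using
      inner_le_suppFn hKc (-EuclideanSpace.single i 1) hx
  have hker : ∀ x ∈ tangentConeOf K 0, x i = 0 → x = 0 := by
    obtain ⟨x₀, hK₀, hT₀⟩ := hspiky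
    rw [singleton_injective (hK₀.symm.trans hzero)] at hT₀
    refine fun x hx hxi => hT₀.subset ⟨hx, ?_⟩
    simp [suppHyp, hsupp, EuclideanSpace.inner_single_right, hxi]
  obtain rfl : δ = sliceGap (tangentConeOf K 0) K (EuclideanSpace.proj i) ε := funext hδ
  rw [tangentConeOf_zero_eq hKconv h0.1] at hker ⊢
  obtain ⟨hmono, hlim⟩ := monotoneOn_and_tendsto_sliceGap_closure_hull
    (EuclideanSpace.proj i) hKconv h0.1 hKint hfK hker hε.1
  exact ⟨fun s t hs hst => hmono hs (hs.trans_le hst) hst, hlim⟩
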